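/- The l1 IQ coherence is multiplicative in the sense: for bipartite density operators ρ_{A1B1} and ρ_{A2B2}, one has 1 + C^{A1A2|B1B2}_{l1}(ρ_{A1B1} ⊗ ρ_{A2B2}) = (1 + C^{A1|B1}_{l1}(ρ_{A1B1}))·(1 + C^{A2|B2}_{l1}(ρ_{A2B2})). -/

import Mathlib

/-! Since `|A ⊗ B| = |A| ⊗ |B|`, the trace norm is multiplicative on Kronecker products, and every
block of `ρ₁ ⊗ ρ₂` is the Kronecker product of a block of `ρ₁` and a block of `ρ₂`; hence
`Σ_{i,j} ‖ρ^B_{ij}‖_tr` is multiplicative. For a density operator the diagonal blocks are positive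
semidefinite with traces summing to one, so this sum is `1 + C_{l1}`. -/

open scoped BigOperators ComplexOrder Kronecker

/-- Trace norm: `‖P‖_tr = Tr √(Pᴴ P)`. -/
noncomputable def traceNorm {n : Type*} [Fintype n] [DecidableEq n] (P : Matrix n n ℂ) : ℝ :=
  (((Matrix.posSemidef_conjTranspose_mul_self P).1.eigenvectorUnitary.1 *
    Matrix.diagonal (((↑) : ℝ → ℂ) ∘ (Real.sqrt ∘ (Matrix.posSemidef_conjTranspose_mul_self P).1.eigenvalues)) *
    (star (Matrix.posSemidef_conjTranspose_mul_self P).1.eigenvectorUnitary : Matrix n n ℂ)).trace).re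

/-- The B-blocks of an operator on H_A ⊗ H_B. -/
def blockB {A B : Type*} (Q : Matrix (A × B) (A × B) ℂ) (i j : A) : Matrix B B ℂ :=
  fun b b' => Q (i, b) (j, b')

/-- l1 norm of IQ coherence: C^{A|B}_{l1}(ρ) = Σ_{i≠j} ‖ρ^B_{ij}‖_tr. -/
noncomputable def CIQl1 {A B : Type*} [Fintype A] [Fintype B] [DecidableEq A] [DecidableEq B]
    (ρ : Matrix (A × B) (A × B) ℂ) : ℝ :=
  ∑ i, ∑ j, if i = j then 0 else traceNorm (blockB ρ i j)

/-- Tensor product of bipartite operators, with the A-systems and B-systems grouped: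
(ρ₁ ⊗ ρ₂) on ((A₁×A₂) × (B₁×B₂)). -/
def tensBip {A₁ B₁ A₂ B₂ : Type*} (ρ₁ : Matrix (A₁ × B₁) (A₁ × B₁) ℂ)
    (ρ₂ : Matrix (A₂ × B₂) (A₂ × B₂) ℂ) :
    Matrix ((A₁ × A₂) × (B₁ × B₂)) ((A₁ × A₂) × (B₁ × B₂)) ℂ :=
  fun p q => ρ₁ (p.1.1, p.2.1) (q.1.1, q.2.1) * ρ₂ (p.1.2, p.2.2) (q.1.2, q.2.2)

open scoped MatrixOrder

namespace Matrix

variable {m n : Type*} [Fintype m] [Fintype n] [DecidableEq m] [DecidableEq n]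

lemma traceNorm_eq_re_trace_abs (P : Matrix n n ℂ) : traceNorm P = (CFC.abs P).trace.re := by
  have hP := posSemidef_conjTranspose_mul_self P
  rw [CFC.abs, CFC.sqrt_eq_cfc, star_eq_conjTranspose, cfc_nnreal_eq_real _ _ hP.nonneg,
    hP.1.cfc_eq, traceNorm]
  simp only [IsHermitian.cfc, Unitary.conjStarAlgAut_apply]
  -- `Real.sqrt x` is by definition `NNReal.sqrt x.toNNReal`, the function the CFC produced
  unfold Real.sqrt
  rfl

lemma abs_kronecker (A : Matrix m m ℂ) (B : Matrix n n ℂ) :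
    CFC.abs (A ⊗ₖ B) = CFC.abs A ⊗ₖ CFC.abs B := by
  have habs : (CFC.abs A ⊗ₖ CFC.abs B).PosSemidef :=
    (nonneg_iff_posSemidef.mp (CFC.abs_nonneg A)).kronecker
      (nonneg_iff_posSemidef.mp (CFC.abs_nonneg B))
  rw [CFC.abs, CFC.sqrt_eq_iff _ _ (star_mul_self_nonneg _) habs.nonneg, ← mul_kronecker_mul,
    CFC.abs_mul_abs, CFC.abs_mul_abs, star_eq_conjTranspose, star_eq_conjTranspose,
    star_eq_conjTranspose, conjTranspose_kronecker, mul_kronecker_mul]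

omit [DecidableEq n] in
lemma PosSemidef.im_trace {M : Matrix n n ℂ} (hM : M.PosSemidef) : M.trace.im = 0 :=
  (Complex.nonneg_iff.mp hM.trace_nonneg).2.symm

lemma traceNorm_kronecker (A : Matrix m m ℂ) (B : Matrix n n ℂ) :
    traceNorm (A ⊗ₖ B) = traceNorm A * traceNorm B := by
  have hA := (nonneg_iff_posSemidef.mp (CFC.abs_nonneg A)).im_trace
  have hB := (nonneg_iff_posSemidef.mp (CFC.abs_nonneg B)).im_trace
  rw [traceNorm_eq_re_trace_abs, traceNorm_eq_re_trace_abs, traceNorm_eq_re_trace_abs,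
    abs_kronecker, trace_kronecker, Complex.mul_re, hA, hB, mul_zero, sub_zero]

lemma PosSemidef.traceNorm_eq {M : Matrix n n ℂ} (hM : M.PosSemidef) :
    traceNorm M = M.trace.re := by
  rw [traceNorm_eq_re_trace_abs, CFC.abs_of_nonneg M hM.nonneg]

end Matrix

open Matrix

section Bipartite

variable {A B : Type*} [Fintype A] [Fintype B]

noncomputable def blockTraceNormSum [DecidableEq B] (ρ : Matrix (A × B) (A × B) ℂ) : ℝ :=
  ∑ i, ∑ j, traceNorm (blockB ρ i j)

lemma trace_eq_sum_trace_blockB (ρ : Matrix (A × B) (A × B) ℂ) :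
    ρ.trace = ∑ i, (blockB ρ i i).trace := by
  simp only [Matrix.trace, Matrix.diag, blockB, Fintype.sum_prod_type]

variable [DecidableEq B]

lemma sum_traceNorm_blockB_self {ρ : Matrix (A × B) (A × B) ℂ} (hρ : ρ.PosSemidef) :
    ∑ i, traceNorm (blockB ρ i i) = ρ.trace.re := by
  rw [trace_eq_sum_trace_blockB, Complex.re_sum]
  exact Finset.sum_congr rfl fun i _ => (hρ.submatrix _).traceNorm_eq

variable [DecidableEq A]

lemma CIQl1_add_sum_traceNorm_blockB_self (ρ : Matrix (A × B) (A × B) ℂ) :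
    CIQl1 ρ + ∑ i, traceNorm (blockB ρ i i) = blockTraceNormSum ρ := by
  rw [CIQl1, blockTraceNormSum, ← Finset.sum_add_distrib]
  refine Finset.sum_congr rfl fun i _ => ?_
  rw [Finset.sum_ite, Finset.sum_const_zero, zero_add, Finset.filter_not, Finset.filter_eq,
    if_pos (Finset.mem_univ i), ← Finset.erase_eq, Finset.sum_erase_add _ _ (Finset.mem_univ i)]

lemma one_add_CIQl1 {ρ : Matrix (A × B) (A × B) ℂ} (hρ : ρ.PosSemidef) (hTr : ρ.trace = 1) :
    1 + CIQl1 ρ = blockTraceNormSum ρ := by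
  rw [← CIQl1_add_sum_traceNorm_blockB_self, sum_traceNorm_blockB_self hρ, hTr, Complex.one_re,
    add_comm]

end Bipartite

section TensorProduct

variable {A₁ B₁ A₂ B₂ : Type*}

lemma blockB_tensBip (ρ₁ : Matrix (A₁ × B₁) (A₁ × B₁) ℂ) (ρ₂ : Matrix (A₂ × B₂) (A₂ × B₂) ℂ)
    (i j : A₁ × A₂) :
    blockB (tensBip ρ₁ ρ₂) i j = blockB ρ₁ i.1 j.1 ⊗ₖ blockB ρ₂ i.2 j.2 :=
  rfl

lemma tensBip_eq_submatrix_kronecker (ρ₁ : Matrix (A₁ × B₁) (A₁ × B₁) ℂ)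
    (ρ₂ : Matrix (A₂ × B₂) (A₂ × B₂) ℂ) :
    tensBip ρ₁ ρ₂ = (ρ₁ ⊗ₖ ρ₂).submatrix (Equiv.prodProdProdComm A₁ A₂ B₁ B₂)
      (Equiv.prodProdProdComm A₁ A₂ B₁ B₂) :=
  rfl

variable [Fintype A₁] [Fintype B₁] [Fintype A₂] [Fintype B₂]

lemma Matrix.PosSemidef.tensBip {ρ₁ : Matrix (A₁ × B₁) (A₁ × B₁) ℂ}
    {ρ₂ : Matrix (A₂ × B₂) (A₂ × B₂) ℂ} (hρ₁ : ρ₁.PosSemidef) (hρ₂ : ρ₂.PosSemidef) :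
    (tensBip ρ₁ ρ₂).PosSemidef := by
  rw [tensBip_eq_submatrix_kronecker]
  exact (hρ₁.kronecker hρ₂).submatrix _

lemma trace_tensBip (ρ₁ : Matrix (A₁ × B₁) (A₁ × B₁) ℂ) (ρ₂ : Matrix (A₂ × B₂) (A₂ × B₂) ℂ) :
    (tensBip ρ₁ ρ₂).trace = ρ₁.trace * ρ₂.trace := by
  rw [trace_eq_sum_trace_blockB, trace_eq_sum_trace_blockB, trace_eq_sum_trace_blockB,
    Fintype.sum_mul_sum, Fintype.sum_prod_type]
  simp only [blockB_tensBip, trace_kronecker]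

variable [DecidableEq B₁] [DecidableEq B₂]

lemma blockTraceNormSum_tensBip (ρ₁ : Matrix (A₁ × B₁) (A₁ × B₁) ℂ)
    (ρ₂ : Matrix (A₂ × B₂) (A₂ × B₂) ℂ) :
    blockTraceNormSum (tensBip ρ₁ ρ₂) = blockTraceNormSum ρ₁ * blockTraceNormSum ρ₂ := by
  simp only [blockTraceNormSum, blockB_tensBip, traceNorm_kronecker, Fintype.sum_prod_type,
    Fintype.sum_mul_sum]

end TensorProduct

/-- multiplicativity:
1 + C^{A₁A₂|B₁B₂}_{l1}(ρ₁ ⊗ ρ₂) = (1 + C^{A₁|B₁}_{l1}(ρ₁)) (1 + C^{A₂|B₂}_{l1}(ρ₂)). -/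
theorem CIQl1_multiplicative {A₁ B₁ A₂ B₂ : Type*} [Fintype A₁] [Fintype B₁] [Fintype A₂]
    [Fintype B₂] [DecidableEq A₁] [DecidableEq B₁] [DecidableEq A₂] [DecidableEq B₂]
    (ρ₁ : Matrix (A₁ × B₁) (A₁ × B₁) ℂ) (ρ₂ : Matrix (A₂ × B₂) (A₂ × B₂) ℂ)
    (hρ₁ : ρ₁.PosSemidef) (hTr₁ : ρ₁.trace = 1)
    (hρ₂ : ρ₂.PosSemidef) (hTr₂ : ρ₂.trace = 1) :
    1 + CIQl1 (tensBip ρ₁ ρ₂) = (1 + CIQl1 ρ₁) * (1 + CIQl1 ρ₂) := by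
  have hTr : (tensBip ρ₁ ρ₂).trace = 1 := by rw [trace_tensBip, hTr₁, hTr₂, one_mul]
  rw [one_add_CIQl1 (hρ₁.tensBip hρ₂) hTr, one_add_CIQl1 hρ₁ hTr₁, one_add_CIQl1 hρ₂ hTr₂,
    blockTraceNormSum_tensBip]
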